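/- arXiv:2108.01827 — 3 statements merged into one kernel-verified Lean document; each statement's English description precedes it below -/
import Mathlib

section
/- For any real sequence γ and nonnegative integers d, n with 1 ≤ m ≤ d, if the Jensen polynomial J_γ^{d,n}(x) has all real roots, then J_γ^{m,n}(x) also has all real roots. -/
open Polynomial Finset

/-- The Jensen polynomial of degree `d` and shift `n` of the sequence `γ`. -/
noncomputable def JensenPoly (γ : ℕ → ℝ) (d n : ℕ) : Polynomial ℝ :=
  ∑ k ∈ Finset.range (d + 1), Polynomial.C ((d.choose k : ℝ) * γ (k + n)) * Polynomial.X ^ k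

/-- A real polynomial has all real roots iff it splits over `ℝ`. -/
def RealRooted (p : Polynomial ℝ) : Prop := (p.map (RingHom.id ℝ)).Splits

/-!
The reversal `X ^ (d + 1) * J^{d+1,n}(1/X)` of a Jensen polynomial has derivative
`(d + 1) * X ^ d * J^{d,n}(1/X)`, because `(d + 1 - k) * C(d + 1, k) = (d + 1) * C(d, k)`.
Reversal preserves real-rootedness (the nonzero roots are inverted), and so does differentiation
by Rolle's theorem; hence `J^{d,n}` is real-rooted whenever `J^{d+1,n}` is, and the theorem follows
by downward induction on the degree.
-/

namespace Polynomial

theorem Splits.reverse {K : Type*} [Field K] {p : K[X]} (hp : p.Splits) : p.reverse.Splits := by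
  induction hp using Submonoid.closure_induction with
  | mem f hf =>
    rcases hf with ⟨a, rfl⟩ | ⟨a, rfl⟩
    · simp
    · exact Splits.of_natDegree_le_one ((reverse_natDegree_le _).trans (natDegree_X_add_C a).le)
  | one => rw [← C_1, reverse_C]; exact Splits.C 1
  | mul f g _ _ hf hg => rw [reverse_mul_of_domain]; exact hf.mul hg

theorem reflect_eq_reverse_mul_X_pow {R : Type*} [Semiring R] {p : R[X]} {N : ℕ}
    (hp : p.natDegree ≤ N) : reflect N p = p.reverse * X ^ (N - p.natDegree) := by
  have h := reflect_mul p 1 le_rfl (natDegree_one.trans_le (Nat.zero_le (N - p.natDegree)))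
  rwa [mul_one, reflect_one, Nat.add_sub_cancel' hp] at h

theorem Splits.reflect {K : Type*} [Field K] {p : K[X]} {N : ℕ} (hp : p.Splits)
    (hN : p.natDegree ≤ N) : (reflect N p).Splits := by
  rw [reflect_eq_reverse_mul_X_pow hN]
  exact hp.reverse.mul (Splits.X_pow _)

theorem Splits.derivative {p : ℝ[X]} (hp : p.Splits) : (derivative p).Splits := by
  rw [splits_iff_card_roots] at hp ⊢
  refine le_antisymm (card_roots' _) ?_
  have hrolle := card_roots_le_derivative p
  have hdeg := natDegree_derivative_le p
  omega

end Polynomial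

theorem realRooted_iff_splits {p : ℝ[X]} : RealRooted p ↔ p.Splits := by
  rw [RealRooted, map_id]

theorem coeff_jensenPoly (γ : ℕ → ℝ) (d n k : ℕ) :
    (JensenPoly γ d n).coeff k = d.choose k * γ (k + n) := by
  simp only [JensenPoly, finsetSum_coeff, coeff_C_mul_X_pow, Finset.sum_ite_eq, mem_range]
  split_ifs with hk
  · rfl
  · rw [Nat.choose_eq_zero_of_lt (by omega), Nat.cast_zero, zero_mul]

theorem natDegree_jensenPoly_le (γ : ℕ → ℝ) (d n : ℕ) : (JensenPoly γ d n).natDegree ≤ d := by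
  rw [natDegree_le_iff_coeff_eq_zero]
  intro k hk
  rw [coeff_jensenPoly, Nat.choose_eq_zero_of_lt (by exact_mod_cast hk), Nat.cast_zero, zero_mul]

theorem derivative_reflect_jensenPoly (γ : ℕ → ℝ) (d n : ℕ) :
    derivative (reflect (d + 1) (JensenPoly γ (d + 1) n)) =
      C ((d : ℝ) + 1) * reflect d (JensenPoly γ d n) := by
  ext k
  rw [coeff_derivative, coeff_reflect, coeff_C_mul, coeff_reflect, coeff_jensenPoly,
    coeff_jensenPoly]
  by_cases hk : k ≤ d
  · rw [revAt_le hk, revAt_le (by omega), show d + 1 - (k + 1) = d - k by omega,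
      Nat.choose_symm_of_eq_add (show d + 1 = d - k + (k + 1) by omega), Nat.choose_symm hk]
    have hchoose : ((d + 1 : ℕ) : ℝ) * d.choose k = (d + 1).choose (k + 1) * (k + 1 : ℕ) := by
      exact_mod_cast Nat.add_one_mul_choose_eq d k
    push_cast at hchoose
    linear_combination (-γ (d - k + n)) * hchoose
  · rw [revAt_eq_self_of_lt (by omega), revAt_eq_self_of_lt (by omega),
      Nat.choose_eq_zero_of_lt (by omega), Nat.choose_eq_zero_of_lt (by omega)]
    simp

theorem realRooted_jensenPoly_of_succ {γ : ℕ → ℝ} {d n : ℕ}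
    (h : RealRooted (JensenPoly γ (d + 1) n)) : RealRooted (JensenPoly γ d n) := by
  rw [realRooted_iff_splits] at h ⊢
  have hderiv := (h.reflect (natDegree_jensenPoly_le γ (d + 1) n)).derivative
  rw [derivative_reflect_jensenPoly] at hderiv
  have hrefl : (reflect d (JensenPoly γ d n)).Splits := by
    have h := hderiv.C_mul ((d : ℝ) + 1)⁻¹
    rwa [← mul_assoc, ← C_mul, inv_mul_cancel₀ (by positivity), C_1, one_mul] at h
  rw [← reflect_reflect (N := d) (p := JensenPoly γ d n)]
  exact hrefl.reflect (natDegree_reflect_le.trans (max_le le_rfl (natDegree_jensenPoly_le γ d n)))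

theorem jensen_lower_degree_realRooted_general (γ : ℕ → ℝ) (d n m : ℕ) (hm : m ≤ d)
    (hd : RealRooted (JensenPoly γ d n)) : RealRooted (JensenPoly γ m n) := by
  induction d, hm using Nat.le_induction with
  | base => exact hd
  | succ d _ ih => exact ih (realRooted_jensenPoly_of_succ hd)

theorem jensen_lower_degree_realRooted (γ : ℕ → ℝ) (d n m : ℕ) (h1 : 1 ≤ m) (hm : m ≤ d)
    (hd : RealRooted (JensenPoly γ d n)) : RealRooted (JensenPoly γ m n) :=
  jensen_lower_degree_realRooted_general γ d n m hm hd
end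

section
/- If a real polynomial p of degree d has all real roots, then L_1(p)(x) = p'(x)² − p(x)p''(x) ≥ 0 for all real x. -/
open Polynomial

/-!
Multiplying a polynomial `q` by a linear factor `X - a` transforms its Laguerre expression
`q'² - q q''` into `(X - a)² (q'² - q q'') + q²`. Over an ordered ring this preserves pointwise
nonnegativity, and constants have Laguerre expression `0`; so by induction on the roots, every
polynomial that splits into linear factors has a nonnegative Laguerre expression.
-/

namespace Polynomial

section CommRing

variable {R : Type*} [CommRing R]

noncomputable def laguerre (p : R[X]) : R[X] :=
  derivative p ^ 2 - p * derivative (derivative p)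

@[simp]
theorem laguerre_C (c : R) : laguerre (C c) = 0 := by
  simp [laguerre]

theorem laguerre_X_sub_C_mul (a : R) (q : R[X]) :
    laguerre ((X - C a) * q) = (X - C a) ^ 2 * laguerre q + q ^ 2 := by
  simp only [laguerre, derivative_mul, derivative_add, derivative_sub, derivative_X,
    derivative_C, sub_zero, one_mul]
  ring

end CommRing

section OrderedRing

variable {R : Type*} [CommRing R] [LinearOrder R] [IsStrictOrderedRing R]

theorem laguerre_X_sub_C_mul_eval_nonneg {a x : R} {q : R[X]} (hq : 0 ≤ (laguerre q).eval x) :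
    0 ≤ (laguerre ((X - C a) * q)).eval x := by
  rw [laguerre_X_sub_C_mul, eval_add, eval_mul, eval_pow, eval_pow]
  positivity

theorem laguerre_C_mul_prod_X_sub_C_eval_nonneg (c : R) (s : Multiset R) (x : R) :
    0 ≤ (laguerre (C c * (s.map (X - C ·)).prod)).eval x := by
  induction s using Multiset.induction with
  | empty => simp
  | cons a s ih =>
    rw [Multiset.map_cons, Multiset.prod_cons, mul_left_comm]
    exact laguerre_X_sub_C_mul_eval_nonneg ih

theorem Splits.laguerre_eval_nonneg {p : R[X]} (hp : p.Splits) (x : R) :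
    0 ≤ (laguerre p).eval x := by
  obtain ⟨s, hs⟩ := splits_iff_exists_multiset.mp hp
  rw [hs]
  exact laguerre_C_mul_prod_X_sub_C_eval_nonneg _ s x

end OrderedRing

end Polynomial

theorem laguerre_ineq_of_realRooted (p : Polynomial ℝ) (hp : RealRooted p) (x : ℝ) :
    (Polynomial.derivative p).eval x ^ 2
      - p.eval x * (Polynomial.derivative (Polynomial.derivative p)).eval x ≥ 0 := by
  rw [RealRooted, Polynomial.map_id] at hp
  simpa [laguerre] using hp.laguerre_eval_nonneg x
end

section
/- If a real polynomial p has all real roots, then L_k(p)(x) ≥ 0 for all real x and all k ≥ 0, where L_k(p)(x) = Σ_{j=0}^{2k} ((−1)^{j+k}/(2k)!) C(2k,j) p^{(j)}(x) p^{(2k−j)}(x). -/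
open Polynomial Finset

/-!
For fixed real `x`, the polynomial `p(x + iY) p(x - iY)` in `Y` has `L_k(p)(x)` as its coefficient
of `Y ^ (2 k)`: expanding both factors in Taylor series at `x` gives the coefficients
`i ^ j (-i) ^ (2k - j) p⁽ʲ⁾(x) p⁽²ᵏ⁻ʲ⁾(x) / (j! (2k - j)!)`. The map `p ↦ p(x + iY) p(x - iY)` is
multiplicative, sends a constant `c` to `c²` and a linear factor `X + a` to `(x + a)² + Y²`.
Hence for a split `p` it is a product of real polynomials with nonnegative coefficients.
-/

namespace Polynomial

def nonnegCoeffs (R : Type*) [Semiring R] [PartialOrder R] [IsOrderedRing R] :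
    Submonoid R[X] where
  carrier := {f | ∀ n, 0 ≤ f.coeff n}
  one_mem' n := by
    rw [coeff_one]
    split_ifs <;> simp
  mul_mem' {f g} hf hg n := by
    rw [coeff_mul]
    exact sum_nonneg fun _ _ => mul_nonneg (hf _) (hg _)

lemma coeff_map_comp_C_add_C_mul_X {R S : Type*} [CommSemiring R] [CommSemiring S] (f : R →+* S)
    (p : R[X]) (x : R) (a : S) (n : ℕ) :
    ((p.map f).comp (C (f x) + C a * X)).coeff n = f ((hasseDeriv n p).eval x) * a ^ n := by
  have : (p.map f).comp (C (f x) + C a * X) = ((taylor x p).map f).comp (C a * X) := by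
    rw [map_taylor, taylor_apply, comp_assoc, add_comp, X_comp, C_comp, add_comm]
  rw [this, comp_C_mul_X_coeff, coeff_map, taylor_coeff]

lemma eval_iterate_derivative {R : Type*} [Semiring R] (p : R[X]) (n : ℕ) (x : R) :
    (derivative^[n] p).eval x = n.factorial * (hasseDeriv n p).eval x := by
  rw [← factorial_smul_hasseDeriv]
  simp [nsmul_eq_mul]

end Polynomial

open Complex

noncomputable def laguerreL (k : ℕ) (p : ℝ[X]) (x : ℝ) : ℝ :=
  ∑ j ∈ range (2 * k + 1), ((-1 : ℝ) ^ (j + k) / ((2 * k).factorial : ℝ)) *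
    ((2 * k).choose j : ℝ) * (derivative^[j] p).eval x * (derivative^[2 * k - j] p).eval x

noncomputable def laguerreProduct (x : ℝ) : ℝ[X] →* ℂ[X] where
  toFun p := (p.map ofRealHom).comp (C (x : ℂ) + C I * X) *
    (p.map ofRealHom).comp (C (x : ℂ) + C (-I) * X)
  map_one' := by simp
  map_mul' p q := by simp only [Polynomial.map_mul, mul_comp]; ring

lemma laguerreProduct_C (x a : ℝ) : laguerreProduct x (C a) = (C (a ^ 2)).map ofRealHom := by
  simp [laguerreProduct, sq]

lemma laguerreProduct_X_add_C (x a : ℝ) :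
    laguerreProduct x (X + C a) = (C ((x + a) ^ 2) + X ^ 2).map ofRealHom := by
  simp only [laguerreProduct, MonoidHom.coe_mk, OneHom.coe_mk, Polynomial.map_add, map_X, map_C,
    Polynomial.map_pow, add_comp, X_comp, C_comp, ofRealHom_eq_coe]
  have hI : (C I : ℂ[X]) ^ 2 = -1 := by rw [← C_pow, I_sq, C_neg, C_1]
  push_cast
  rw [C_neg, C_pow, C_add]
  linear_combination (-(X ^ 2 : ℂ[X])) * hI

lemma laguerreProduct_mem_of_splits (x : ℝ) {p : ℝ[X]} (hp : p.Splits) :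
    laguerreProduct x p ∈ (nonnegCoeffs ℝ).map (mapRingHom ofRealHom) := by
  have hgen : {C a | a : ℝ} ∪ {X + C a | a : ℝ} ⊆
      ((nonnegCoeffs ℝ).map (mapRingHom ofRealHom)).comap (laguerreProduct x) := by
    rintro _ (⟨a, rfl⟩ | ⟨a, rfl⟩)
    · refine ⟨C (a ^ 2), fun n => ?_, (laguerreProduct_C x a).symm⟩
      rw [coeff_C]
      split_ifs <;> positivity
    · refine ⟨C ((x + a) ^ 2) + X ^ 2, fun n => ?_, (laguerreProduct_X_add_C x a).symm⟩
      rw [coeff_add, coeff_C, coeff_X_pow]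
      split_ifs <;> positivity
  exact Submonoid.closure_le.mpr hgen hp

lemma coeff_laguerreProduct (x : ℝ) (p : ℝ[X]) (n : ℕ) :
    (laguerreProduct x p).coeff n = ∑ j ∈ range (n + 1),
      ((hasseDeriv j p).eval x * (hasseDeriv (n - j) p).eval x : ℝ) * (I ^ j * (-I) ^ (n - j)) := by
  simp only [laguerreProduct, MonoidHom.coe_mk, OneHom.coe_mk, coeff_mul,
    Nat.sum_antidiagonal_eq_sum_range_succ_mk]
  refine sum_congr rfl fun j _ => ?_
  rw [← ofRealHom_eq_coe x, coeff_map_comp_C_add_C_mul_X, coeff_map_comp_C_add_C_mul_X]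
  simp only [ofRealHom_eq_coe]
  push_cast
  ring

lemma I_pow_mul_neg_I_pow {j k : ℕ} (h : j ≤ 2 * k) :
    I ^ j * (-I) ^ (2 * k - j) = (-1) ^ (j + k) := by
  obtain ⟨m, hm⟩ := Nat.exists_eq_add_of_le h
  have hsign : (-1 : ℂ) ^ m = (-1) ^ j := by
    rw [neg_one_pow_eq_pow_mod_two, neg_one_pow_eq_pow_mod_two (n := j)]
    congr 1
    omega
  rw [hm, Nat.add_sub_cancel_left, neg_pow, pow_add, mul_left_comm, ← pow_add, ← hm, pow_mul, I_sq,
    hsign]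

lemma coeff_two_mul_laguerreProduct (x : ℝ) (p : ℝ[X]) (k : ℕ) :
    (laguerreProduct x p).coeff (2 * k) = laguerreL k p x := by
  rw [coeff_laguerreProduct, laguerreL, ofReal_sum]
  refine sum_congr rfl fun j hj => ?_
  have hj : j ≤ 2 * k := Nat.lt_succ_iff.mp (mem_range.mp hj)
  rw [I_pow_mul_neg_I_pow hj, eval_iterate_derivative, eval_iterate_derivative, Nat.cast_choose ℝ hj]
  field_simp
  push_cast
  ring

lemma laguerreL_nonneg_of_splits {p : ℝ[X]} (hp : p.Splits) (k : ℕ) (x : ℝ) :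
    0 ≤ laguerreL k p x := by
  obtain ⟨G, hG, hGp⟩ := laguerreProduct_mem_of_splits x hp
  have hcoeff : (G.coeff (2 * k) : ℂ) = laguerreL k p x := by
    rw [← coeff_two_mul_laguerreProduct, ← hGp, coe_mapRingHom, coeff_map, ofRealHom_eq_coe]
  exact ofReal_injective hcoeff ▸ hG (2 * k)

theorem extended_laguerre_ineq_of_realRooted (p : Polynomial ℝ) (hp : RealRooted p)
    (k : ℕ) (x : ℝ) :
    0 ≤ ∑ j ∈ Finset.range (2 * k + 1),
      ((-1 : ℝ) ^ (j + k) / ((2 * k).factorial : ℝ)) * ((2 * k).choose j : ℝ) *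
        ((Polynomial.derivative (R := ℝ))^[j] p).eval x *
        ((Polynomial.derivative (R := ℝ))^[2 * k - j] p).eval x :=
  laguerreL_nonneg_of_splits (by simpa [RealRooted] using hp) k x
end
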